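/- If n ≥ 1 is not a multiple of 3, then no n-transversal edge of the n-dimensional varietal hypercube VQ_n is contained in a cycle of length 5. -/

import Mathlib

/-!
Dropping the leading bit sends an edge inside one copy of `VQ_{n-1}` to an edge of `VQ_{n-1}`
and, when `3 ∤ n`, contracts an `n`-transversal edge to a single vertex. A closed walk crosses
between the two copies an even number of times, so a closed walk of length 5 through a
transversal edge collapses to a closed walk of length 3 or 1 in `VQ_{n-1}`. Neither exists:
every `VQ_k` is triangle-free by induction: its transversal edges form a matching, so a
triangle uses none of them and projects to a triangle of `VQ_{k-1}`.
-/

/-- The relation `I = {(00,00),(01,01),(10,11),(11,10)}` on pairs of bits,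
where a pair `(a, b)` records two consecutive bits (higher bit first). -/
def vqCross (p q : Bool × Bool) : Prop :=
  (p = (false, false) ∧ q = (false, false)) ∨
  (p = (false, true) ∧ q = (false, true)) ∨
  (p = (true, false) ∧ q = (true, true)) ∨
  (p = (true, true) ∧ q = (true, false))

/-- Adjacency in the varietal hypercube `VQ n`.  A vertex is a function
`Fin n → Bool`, the bit `x_k` (1-indexed, `x = x_n x_{n-1} ⋯ x_1`) being
the value at index `k - 1`; the leading bit `x_n` is at index `n - 1`. -/
def vqAdj : (n : ℕ) → (Fin n → Bool) → (Fin n → Bool) → Prop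
  | 0, _, _ => False
  | 1, x, y => x ≠ y
  | (n + 2), x, y =>
    if x (Fin.last (n + 1)) = y (Fin.last (n + 1)) then
      -- both in the same copy of `VQ (n+1)`
      vqAdj (n + 1) (fun i => x i.castSucc) (fun i => y i.castSucc)
    else
      if 3 ∣ (n + 2) then
        (∀ i : Fin (n + 2), i.val < n - 1 → x i = y i) ∧
        vqCross (x ⟨n, by omega⟩, x ⟨n - 1, by omega⟩)
          (y ⟨n, by omega⟩, y ⟨n - 1, by omega⟩)
      else
        ∀ i : Fin (n + 1), x i.castSucc = y i.castSucc

/-- The `n`-dimensional varietal hypercube `VQ_n`. -/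
def varietalCube (n : ℕ) : SimpleGraph (Fin n → Bool) :=
  SimpleGraph.fromRel (vqAdj n)

lemma vqCross_symm {p q : Bool × Bool} (h : vqCross p q) : vqCross q p := by
  obtain ⟨a, b⟩ := p; obtain ⟨c, d⟩ := q
  revert h; cases a <;> cases b <;> cases c <;> cases d <;> simp [vqCross]

lemma vqCross_right_unique {p q r : Bool × Bool} (hq : vqCross p q) (hr : vqCross p r) :
    q = r := by
  obtain ⟨a, b⟩ := p; obtain ⟨c, d⟩ := q; obtain ⟨e, f⟩ := r
  revert hq hr; cases a <;> cases b <;> cases c <;> cases d <;> cases e <;> cases f <;>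
    simp [vqCross]

lemma vqAdj_symm : ∀ {n : ℕ} {x y : Fin n → Bool}, vqAdj n x y → vqAdj n y x
  | 0, _, _, h => h
  | 1, _, _, h => Ne.symm h
  | n + 2, x, y, h => by
    unfold vqAdj at h ⊢
    by_cases hl : x (Fin.last (n + 1)) = y (Fin.last (n + 1))
    · rw [if_pos hl] at h; rw [if_pos hl.symm]; exact vqAdj_symm h
    · rw [if_neg hl] at h; rw [if_neg (Ne.symm hl)]
      split_ifs at h ⊢
      · exact ⟨fun i hi => (h.1 i hi).symm, vqCross_symm h.2⟩
      · exact fun i => (h i).symm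

lemma varietalCube_adj {n : ℕ} {x y : Fin n → Bool} :
    (varietalCube n).Adj x y ↔ x ≠ y ∧ vqAdj n x y := by
  rw [varietalCube, SimpleGraph.fromRel_adj, or_iff_left_of_imp vqAdj_symm]

lemma Fin.eq_of_init_eq_of_last_eq {α : Sort*} {n : ℕ} {x y : Fin (n + 1) → α}
    (hinit : Fin.init x = Fin.init y) (hlast : x (Fin.last n) = y (Fin.last n)) : x = y := by
  rw [← Fin.snoc_init_self x, ← Fin.snoc_init_self y, hinit, hlast]

lemma varietalCube_adj_init_of_last_eq {m : ℕ} {x y : Fin (m + 1) → Bool}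
    (hadj : (varietalCube (m + 1)).Adj x y) (hlast : x (Fin.last m) = y (Fin.last m)) :
    (varietalCube m).Adj (Fin.init x) (Fin.init y) := by
  obtain ⟨hne, hxy⟩ := varietalCube_adj.1 hadj
  have hinit : Fin.init x ≠ Fin.init y := fun h => hne (Fin.eq_of_init_eq_of_last_eq h hlast)
  cases m with
  | zero => exact absurd (Subsingleton.elim _ _) hinit
  | succ m =>
    unfold vqAdj at hxy
    rw [if_pos hlast] at hxy
    exact varietalCube_adj.2 ⟨hinit, hxy⟩

lemma varietalCube_init_eq_of_last_ne {m : ℕ} (h3 : ¬ 3 ∣ m + 1) {x y : Fin (m + 1) → Bool}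
    (hadj : (varietalCube (m + 1)).Adj x y) (hlast : x (Fin.last m) ≠ y (Fin.last m)) :
    Fin.init x = Fin.init y := by
  cases m with
  | zero => exact Subsingleton.elim _ _
  | succ m =>
    have hxy := (varietalCube_adj.1 hadj).2
    unfold vqAdj at hxy
    rw [if_neg hlast, if_neg h3] at hxy
    exact funext hxy

lemma Bool.eq_of_ne_of_ne {a b c : Bool} (hb : a ≠ b) (hc : a ≠ c) : b = c := by
  cases a <;> cases b <;> cases c <;> simp_all

lemma varietalCube_eq_of_adj_of_last_ne {m : ℕ} {x y z : Fin (m + 1) → Bool}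
    (hy : (varietalCube (m + 1)).Adj x y) (hz : (varietalCube (m + 1)).Adj x z)
    (hly : x (Fin.last m) ≠ y (Fin.last m)) (hlz : x (Fin.last m) ≠ z (Fin.last m)) :
    y = z := by
  have hlast : y (Fin.last m) = z (Fin.last m) := Bool.eq_of_ne_of_ne hly hlz
  refine Fin.eq_of_init_eq_of_last_eq ?_ hlast
  cases m with
  | zero => exact Subsingleton.elim _ _
  | succ m =>
    have hxy := (varietalCube_adj.1 hy).2
    have hxz := (varietalCube_adj.1 hz).2
    unfold vqAdj at hxy hxz
    rw [if_neg hly] at hxy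
    rw [if_neg hlz] at hxz
    split_ifs at hxy hxz
    · have hpair := vqCross_right_unique hxy.2 hxz.2
      funext i
      change y i.castSucc = z i.castSucc
      by_cases hi : i.val < m - 1
      · exact (hxy.1 i.castSucc hi).symm.trans (hxz.1 i.castSucc hi)
      · obtain h | h : i.val = m - 1 ∨ i.val = m := by omega
        · rw [show i.castSucc = ⟨m - 1, by omega⟩ from Fin.ext h]
          exact congrArg Prod.snd hpair
        · rw [show i.castSucc = ⟨m, by omega⟩ from Fin.ext h]
          exact congrArg Prod.fst hpair
    · exact funext fun i => (hxy i).symm.trans (hxz i)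

theorem varietalCube_cliqueFree_three (n : ℕ) : (varietalCube n).CliqueFree 3 := by
  classical
  induction n with
  | zero =>
    intro s hs
    obtain ⟨a, b, -, hab, -⟩ := SimpleGraph.is3Clique_iff.1 hs
    exact (varietalCube_adj.1 hab).2
  | succ m ih =>
    intro s hs
    obtain ⟨a, b, c, hab, hac, hbc, -⟩ := SimpleGraph.is3Clique_iff.1 hs
    by_cases hb : a (Fin.last m) = b (Fin.last m) <;> by_cases hc : a (Fin.last m) = c (Fin.last m)
    · exact ih _ <| SimpleGraph.is3Clique_triple_iff.2
        ⟨varietalCube_adj_init_of_last_eq hab hb, varietalCube_adj_init_of_last_eq hac hc,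
          varietalCube_adj_init_of_last_eq hbc (hb ▸ hc)⟩
    · exact hab.ne (varietalCube_eq_of_adj_of_last_ne hac.symm hbc.symm (Ne.symm hc)
        fun h => hc (hb.trans h.symm))
    · exact hac.ne (varietalCube_eq_of_adj_of_last_ne hab.symm hbc (Ne.symm hb)
        fun h => hb (hc.trans h.symm))
    · exact hbc.ne (varietalCube_eq_of_adj_of_last_ne hab hac hb hc)

namespace SimpleGraph.Walk

variable {V W : Type*} {G : SimpleGraph V} {H : SimpleGraph W}

lemma length_ne_one {u : V} (p : G.Walk u u) : p.length ≠ 1 :=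
  fun h => G.loopless.irrefl u (adj_of_length_eq_one h)

lemma length_ne_three_of_cliqueFree (hG : G.CliqueFree 3) {u : V} :
    ∀ p : G.Walk u u, p.length ≠ 3
  | cons hab (cons hbc (cons hca nil)), _ => by
    classical
    exact hG _ (is3Clique_triple_iff.2 ⟨hab, hca.symm, hbc⟩)

lemma even_countP_darts_iff (t : V → Bool) {u v : V} (p : G.Walk u v) :
    Even (p.darts.countP fun d => t d.fst != t d.snd) ↔ t u = t v := by
  induction p with
  | nil => simp
  | cons h p ih =>
    rename_i u w v
    by_cases htw : t u = t w
    · simpa [htw] using ih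
    · have hbne : (t u != t w) = true := bne_iff_ne.2 htw
      simp only [darts_cons, List.countP_cons, hbne, if_true, Nat.even_add_one, ih]
      revert htw ih
      cases t u <;> cases t w <;> cases t v <;> simp

section Collapse

variable (f : V → W) (t : V → Bool)
  (hsame : ∀ ⦃u v⦄, G.Adj u v → t u = t v → H.Adj (f u) (f v))
  (hcross : ∀ ⦃u v⦄, G.Adj u v → t u ≠ t v → f u = f v)

noncomputable def collapse : ∀ {u v : V}, G.Walk u v → H.Walk (f u) (f v)
  | _, _, nil => nil
  | u, _, cons (v := w) h p =>
    if ht : t u = t w then cons (hsame h ht) (collapse p)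
    else (collapse p).copy (hcross h ht).symm rfl

lemma length_collapse_add_countP {u v : V} (p : G.Walk u v) :
    (p.collapse f t hsame hcross).length + p.darts.countP (fun d => t d.fst != t d.snd) =
      p.length := by
  induction p with
  | nil => rfl
  | cons h p ih =>
    rename_i u w v
    by_cases htw : t u = t w
    · simp only [collapse, htw, dite_true, length_cons, darts_cons, List.countP_cons,
        bne_self_eq_false, Bool.false_eq_true, if_false]
      omega
    · have hbne : (t u != t w) = true := bne_iff_ne.2 htw
      simp only [collapse, htw, dite_false, length_copy, length_cons, darts_cons,
        List.countP_cons, hbne, if_true]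
      omega

end Collapse

end SimpleGraph.Walk

/-- If `n ≥ 1` is not a multiple of `3`, no `n`-transversal edge of `VQ_n`
(an edge joining a vertex with leading bit `0` to one with leading bit `1`)
is contained in a cycle of length `5`. -/
theorem stmt7 (n : ℕ) (hn : 1 ≤ n) (h3 : ¬ 3 ∣ n) (x y : Fin n → Bool)
    (hx : x ⟨n - 1, by omega⟩ = false) (hy : y ⟨n - 1, by omega⟩ = true) :
    ¬ ∃ (v : Fin n → Bool) (C : (varietalCube n).Walk v v),
        C.IsCycle ∧ C.length = 5 ∧ s(x, y) ∈ C.edges := by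
  rintro ⟨v, C, -, hlen, hxy⟩
  obtain ⟨m, rfl⟩ : ∃ m, n = m + 1 := ⟨n - 1, by omega⟩
  let t : (Fin (m + 1) → Bool) → Bool := fun z => z (Fin.last m)
  have hcross_pos : 0 < C.darts.countP fun d => t d.fst != t d.snd := by
    rw [SimpleGraph.Walk.edges, List.mem_map] at hxy
    obtain ⟨d, hd, hdxy⟩ := hxy
    refine List.countP_pos_iff.2 ⟨d, hd, ?_⟩
    rcases Sym2.eq_iff.1 hdxy with ⟨h1, h2⟩ | ⟨h1, h2⟩ <;> simp_all [t, Fin.last]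
  obtain ⟨k, hk⟩ := (C.even_countP_darts_iff t).2 rfl
  let D := C.collapse Fin.init t (fun _ _ => varietalCube_adj_init_of_last_eq)
    (fun _ _ => varietalCube_init_eq_of_last_ne h3)
  have hD : D.length + _ = 5 := hlen ▸ C.length_collapse_add_countP _ _ _ _
  obtain h | h : D.length = 1 ∨ D.length = 3 := by omega
  · exact SimpleGraph.Walk.length_ne_one _ h
  · exact SimpleGraph.Walk.length_ne_three_of_cliqueFree (varietalCube_cliqueFree_three m) _ h
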